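/- (Correctness of S-List-Unfold') Let f : α → β → β and z : β, and let g : β → Gen (Option (α × β)) be such that for every b : β, g b is a correct generator for the predicate P b := fun step => (step = none ∧ z = b) ∨ (∃ x b', step = some (x, b') ∧ f x b' = b) (i.e., ∀ b step, step ∈ ⟦g b⟧ ↔ P b step). Then for every b : β, List.unfold g b is a correct generator for the predicate fun xs => List.fold f z xs = b (i.e., ∀ xs, xs ∈ ⟦List.unfold g b⟧ ↔ List.fold f z xs = b). -/

import Mathlib

/-!
With fuel `n`, `listUnfold.go g b n` yields `some xs` exactly when `listFold f z xs = b` and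
`xs` is shorter than `n`: by induction on `xs`, correctness of `g b` says that each step of the
generator undoes one step of the fold. So every such `xs` is produced once the fuel exceeds its
length and for all larger fuel, which is precisely membership in the `indexed` generator.
-/

namespace PBT

inductive Gen : Type → Type 1 where
  | pure {α : Type} : α → Gen α
  | pick {α : Type} : Gen α → Gen α → Gen α
  | bind {α β : Type} : Gen α → (α → Gen β) → Gen β
  | indexed {α : Type} : (ℕ → Gen (Option α)) → Gen α
  | assume {α : Type} : (b : Bool) → (b = true → Gen α) → Gen α

instance : Pure Gen := ⟨Gen.pure⟩
instance : Bind Gen := ⟨Gen.bind⟩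

def Gen.support : {α : Type} → Gen α → Set α
  | _, .pure a' => {a | a = a'}
  | _, .pick x y => {a | a ∈ x.support ∨ a ∈ y.support}
  | _, .bind x f => {a | ∃ a', a' ∈ x.support ∧ a ∈ (f a').support}
  | _, .indexed f => {a | (∃ n, some a ∈ (f n).support) ∧
      (∀ a' n, some a' ∈ (f n).support → some a' ∈ (f (n + 1)).support)}
  | _, .assume b k => {a | ∃ h : b = true, a ∈ (k h).support}

notation (priority := high) "⟦" g "⟧" => Gen.support g

def listFold {α β : Type} (f : α → β → β) (z : β) : List α → β
  | [] => z
  | x :: xs => f x (listFold f z xs)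

def listUnfold.go {α β : Type} (g : β → Gen (Option (α × β))) : β → ℕ → Gen (Option (List α))
  | _, 0 => .pure none
  | b, fuel + 1 =>
    g b >>= fun step =>
      match step with
      | none => .pure (some [])
      | some (x, b') =>
        listUnfold.go g b' fuel >>= fun mxs =>
          match mxs with
          | none => .pure none
          | some xs => .pure (some (x :: xs))

def listUnfold {α β : Type} (g : β → Gen (Option (α × β))) (b : β) : Gen (List α) :=
  .indexed (listUnfold.go g b)


namespace Gen

variable {α β : Type}

@[simp]
theorem mem_support_pure {a a' : α} : a ∈ ⟦(Gen.pure a' : Gen α)⟧ ↔ a = a' := Iff.rfl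

@[simp]
theorem mem_support_bind {x : Gen α} {f : α → Gen β} {b : β} :
    b ∈ ⟦x >>= f⟧ ↔ ∃ a ∈ ⟦x⟧, b ∈ ⟦f a⟧ := Iff.rfl

theorem mem_support_indexed {f : ℕ → Gen (Option α)} {a : α} :
    a ∈ ⟦indexed f⟧ ↔
      (∃ n, some a ∈ ⟦f n⟧) ∧ ∀ a' n, some a' ∈ ⟦f n⟧ → some a' ∈ ⟦f (n + 1)⟧ := Iff.rfl

theorem mem_support_indexed_iff_of_fuel {f : ℕ → Gen (Option α)} {p : α → Prop} (N : α → ℕ)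
    (hf : ∀ n a, some a ∈ ⟦f n⟧ ↔ p a ∧ N a < n) (a : α) :
    a ∈ ⟦indexed f⟧ ↔ p a := by
  simp only [mem_support_indexed, hf]
  refine ⟨fun ⟨⟨_, hp, _⟩, _⟩ => hp, fun hp => ⟨⟨N a + 1, hp, lt_add_one _⟩, ?_⟩⟩
  exact fun _ n ⟨hp', hlt⟩ => ⟨hp', hlt.trans (lt_add_one n)⟩

end Gen

namespace listUnfold

variable {α β : Type} (g : β → Gen (Option (α × β)))

theorem some_not_mem_support_go_zero (b : β) (xs : List α) : some xs ∉ ⟦go g b 0⟧ := by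
  simp [go]

theorem some_nil_mem_support_go_succ (b : β) (n : ℕ) :
    some [] ∈ ⟦go g b (n + 1)⟧ ↔ none ∈ ⟦g b⟧ := by
  simp [go, Option.exists]

theorem some_cons_mem_support_go_succ (b : β) (n : ℕ) (x : α) (xs : List α) :
    some (x :: xs) ∈ ⟦go g b (n + 1)⟧ ↔ ∃ b', some (x, b') ∈ ⟦g b⟧ ∧ some xs ∈ ⟦go g b' n⟧ := by
  simp [go, Option.exists, Prod.exists]

theorem some_mem_support_go_iff {f : α → β → β} {z : β}
    (hg : ∀ b step,
      step ∈ ⟦g b⟧ ↔ (step = none ∧ z = b) ∨ ∃ x b', step = some (x, b') ∧ f x b' = b) :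
    ∀ (xs : List α) (b : β) (n : ℕ), some xs ∈ ⟦go g b n⟧ ↔ listFold f z xs = b ∧ xs.length < n
  | xs, b, 0 => by simp [some_not_mem_support_go_zero]
  | [], b, n + 1 => by simp [some_nil_mem_support_go_succ, hg, listFold]
  | x :: xs, b, n + 1 => by
    simp [some_cons_mem_support_go_succ, hg, some_mem_support_go_iff hg xs, listFold]

end listUnfold

theorem s_list_unfold_correct {α β : Type} (f : α → β → β) (z : β)
    (g : β → Gen (Option (α × β)))
    (hg : ∀ (b : β) (step : Option (α × β)),
      step ∈ ⟦g b⟧ ↔ (step = none ∧ z = b) ∨ ∃ x b', step = some (x, b') ∧ f x b' = b) :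
    ∀ (b : β) (xs : List α), xs ∈ ⟦listUnfold g b⟧ ↔ listFold f z xs = b := by
  intro b
  exact Gen.mem_support_indexed_iff_of_fuel List.length
    fun n xs => listUnfold.some_mem_support_go_iff g hg xs b n

end PBT
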